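/- As a semi-cosimplicial set, any cosimplicial set X splits as a disjoint union of constant sub-cosimplicial sets, one for each y ∈ X^0 with d^0 y = d^1 y, and free semi-cosimplicial sets Inj(r) generated by the non-coface elements y with d^0 y ≠ d^1 y (when y ∈ X^0) or y of positive degree. -/

import Mathlib

/-!
Every `x ∈ X^q` is `X(f) y` for a monotone injection `f : [p] → [q]` and a non-coface `y`: descend
along cofaces until none applies. Monotone injections have monotone retractions `r`, so `X(f)` is
injective, and if `X(f) y = X(g) z` for non-cofaces `y, z` then `X(f ≫ r_g) y = z` forces `f ≫ r_g`
to be surjective; by symmetry `p = p'`, `f ≫ r_g = id` and `y = z`. The same argument shows that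
`X(f) y = X(g) y` makes `f` and `g` have the same retractions, which in positive degree forces
`f = g`. In degree `0`, points `a < b` of `[q]` span an edge `m` with `X(a) y = X(m) (d¹ y)` and
`X(b) y = X(m) (d⁰ y)`, so `X(f) y` is independent of `f` exactly when `d⁰ y = d¹ y`.
-/

open CategoryTheory

/-- The free semi-cosimplicial set represented by `[p]`, in degree `q`:
monotone injections `[p] → [q]`, i.e. order embeddings. -/
abbrev InjEmb (p q : ℕ) : Type := Fin (p + 1) ↪o Fin (q + 1)

/-- An element `y ∈ X^p` is a *non-coface* if it is not in the image of `X(f)` for any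
non-identity monotone injection `f`. -/
def NotCoface (X : CosimplicialObject (Type)) {p : ℕ}
    (y : X.obj (SimplexCategory.mk p)) : Prop :=
  ∀ (p' : ℕ), p' < p → ∀ (f : SimplexCategory.mk p' ⟶ SimplexCategory.mk p),
    Function.Injective f.toOrderHom → ∀ z, X.map f z ≠ y

open Simplicial

namespace SimplexCategory

variable {x y : SimplexCategory}

noncomputable def floorRetraction (f : x ⟶ y) : y ⟶ x :=
  Hom.mk ⟨fun t => (Finset.univ.filter fun j => f.toOrderHom j ≤ t).sup id,
    fun _ _ h => Finset.sup_mono fun j hj => by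
      simp only [Finset.mem_filter, Finset.mem_univ, true_and] at hj ⊢
      exact hj.trans h⟩

noncomputable def ceilRetraction (f : x ⟶ y) : y ⟶ x :=
  Hom.mk ⟨fun t => (Finset.univ.filter fun j => t ≤ f.toOrderHom j).inf id,
    fun _ _ h => Finset.inf_mono fun j hj => by
      simp only [Finset.mem_filter, Finset.mem_univ, true_and] at hj ⊢
      exact h.trans hj⟩

lemma floorRetraction_apply_le (f : x ⟶ y) (t : Fin (y.len + 1))
    (ht : (floorRetraction f).toOrderHom t ≠ 0) :
    f.toOrderHom ((floorRetraction f).toOrderHom t) ≤ t := by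
  set s := Finset.univ.filter fun j => f.toOrderHom j ≤ t
  obtain ⟨j, hj, hsup⟩ := Finset.exists_mem_eq_sup s
    (Finset.nonempty_iff_ne_empty.mpr fun hs => ht (by
      change s.sup id = 0
      rw [hs, Finset.sup_empty, bot_eq_zero])) id
  change f.toOrderHom (s.sup id) ≤ t
  rw [hsup]
  exact (Finset.mem_filter.mp hj).2

lemma le_ceilRetraction_apply (f : x ⟶ y) (t : Fin (y.len + 1))
    (ht : (ceilRetraction f).toOrderHom t ≠ Fin.last _) :
    t ≤ f.toOrderHom ((ceilRetraction f).toOrderHom t) := by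
  set s := Finset.univ.filter fun j => t ≤ f.toOrderHom j
  obtain ⟨j, hj, hinf⟩ := Finset.exists_mem_eq_inf s
    (Finset.nonempty_iff_ne_empty.mpr fun hs => ht (by
      change s.inf id = _
      rw [hs, Finset.inf_empty, Fin.top_eq_last])) id
  change t ≤ f.toOrderHom (s.inf id)
  rw [hinf]
  exact (Finset.mem_filter.mp hj).2

lemma comp_floorRetraction (f : x ⟶ y) [Mono f] : f ≫ floorRetraction f = 𝟙 x := by
  have hf := f.toOrderHom.monotone.strictMono_of_injective (mono_iff_injective.mp ‹_›)
  refine Hom.ext _ _ (OrderHom.ext _ _ (funext fun i => ?_))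
  change (Finset.univ.filter fun j => f.toOrderHom j ≤ f.toOrderHom i).sup id = i
  exact le_antisymm
    (Finset.sup_le fun j hj => hf.le_iff_le.mp (Finset.mem_filter.mp hj).2)
    (Finset.le_sup (f := id) (b := i) (by simp))

lemma comp_ceilRetraction (f : x ⟶ y) [Mono f] : f ≫ ceilRetraction f = 𝟙 x := by
  have hf := f.toOrderHom.monotone.strictMono_of_injective (mono_iff_injective.mp ‹_›)
  refine Hom.ext _ _ (OrderHom.ext _ _ (funext fun i => ?_))
  change (Finset.univ.filter fun j => f.toOrderHom i ≤ f.toOrderHom j).inf id = i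
  exact le_antisymm
    (Finset.inf_le (f := id) (b := i) (by simp))
    (Finset.le_inf fun j hj => hf.le_iff_le.mp (Finset.mem_filter.mp hj).2)

instance isSplitMono_of_mono (f : x ⟶ y) [Mono f] : IsSplitMono f :=
  .mk' ⟨floorRetraction f, comp_floorRetraction f⟩

lemma le_of_comp_floorRetraction {f g : x ⟶ y} (h : g ≫ floorRetraction f = 𝟙 x)
    {i : Fin (x.len + 1)} (hi : i ≠ 0) : f.toOrderHom i ≤ g.toOrderHom i := by
  have hgi : (floorRetraction f).toOrderHom (g.toOrderHom i) = i :=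
    congrArg (fun r => r.toOrderHom i) h
  simpa only [hgi] using floorRetraction_apply_le f (g.toOrderHom i) (by rwa [hgi])

lemma le_of_comp_ceilRetraction {f g : x ⟶ y} (h : g ≫ ceilRetraction f = 𝟙 x)
    {i : Fin (x.len + 1)} (hi : i ≠ Fin.last _) : g.toOrderHom i ≤ f.toOrderHom i := by
  have hgi : (ceilRetraction f).toOrderHom (g.toOrderHom i) = i :=
    congrArg (fun r => r.toOrderHom i) h
  simpa only [hgi] using le_ceilRetraction_apply f (g.toOrderHom i) (by rwa [hgi])

/-- A floor retraction gives `f i ≤ g i` away from the first vertex, a ceil retraction away from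
the last one. -/
lemma toOrderHom_le_of_comp_eq_id_iff (hx : x.len ≠ 0) (f g : x ⟶ y) [Mono f] [Mono g]
    (H : ∀ r : y ⟶ x, f ≫ r = 𝟙 x ↔ g ≫ r = 𝟙 x) (i : Fin (x.len + 1)) :
    f.toOrderHom i ≤ g.toOrderHom i := by
  rcases eq_or_ne i 0 with rfl | hi
  · refine le_of_comp_ceilRetraction ((H _).mpr (comp_ceilRetraction g)) ?_
    exact fun h => hx (by simpa using congrArg Fin.val h.symm)
  · exact le_of_comp_floorRetraction ((H _).mp (comp_floorRetraction f)) hi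

lemma eq_of_comp_eq_id_iff (hx : x.len ≠ 0) (f g : x ⟶ y) [Mono f] [Mono g]
    (H : ∀ r : y ⟶ x, f ≫ r = 𝟙 x ↔ g ≫ r = 𝟙 x) : f = g :=
  Hom.ext _ _ (OrderHom.ext _ _ (funext fun i =>
    le_antisymm (toOrderHom_le_of_comp_eq_id_iff hx f g H i)
      (toOrderHom_le_of_comp_eq_id_iff hx g f (fun r => (H r).symm) i)))

instance mono_from_zero (f : ⦋0⦌ ⟶ y) : Mono f :=
  mono_iff_injective.mpr fun _ _ _ => Subsingleton.elim (α := Fin 1) _ _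

lemma δ_one_comp_mkOfLe {n : ℕ} (a b : Fin (n + 1)) (h : a ≤ b) :
    δ 1 ≫ mkOfLe a b h = const ⦋0⦌ ⦋n⦌ a :=
  Hom.ext_zero_left _ _ rfl

lemma δ_zero_comp_mkOfLe {n : ℕ} (a b : Fin (n + 1)) (h : a ≤ b) :
    δ 0 ≫ mkOfLe a b h = const ⦋0⦌ ⦋n⦌ b :=
  Hom.ext_zero_left _ _ rfl

lemma mono_mkOfLe {n : ℕ} {a b : Fin (n + 1)} (h : a < b) : Mono (mkOfLe a b h.le) := by
  rw [mono_iff_injective]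
  intro s t hst
  fin_cases s <;> fin_cases t
  · rfl
  · exact absurd (hst : a = b) h.ne
  · exact absurd (hst : b = a) h.ne'
  · rfl

def ofOrderEmbedding {p q : ℕ} (φ : Fin (p + 1) ↪o Fin (q + 1)) : ⦋p⦌ ⟶ ⦋q⦌ :=
  mkHom φ.toOrderHom

instance {p q : ℕ} (φ : Fin (p + 1) ↪o Fin (q + 1)) : Mono (ofOrderEmbedding φ) :=
  mono_iff_injective.mpr φ.injective

lemma ofOrderEmbedding_injective {p q : ℕ} :
    Function.Injective (ofOrderEmbedding : (Fin (p + 1) ↪o Fin (q + 1)) → (⦋p⦌ ⟶ ⦋q⦌)) :=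
  fun _ _ h => by
    ext i
    exact congrArg (fun f : ⦋p⦌ ⟶ ⦋q⦌ => (f.toOrderHom i : ℕ)) h

lemma exists_ofOrderEmbedding_eq {p q : ℕ} (f : ⦋p⦌ ⟶ ⦋q⦌) [Mono f] :
    ∃ φ : Fin (p + 1) ↪o Fin (q + 1), ofOrderEmbedding φ = f :=
  ⟨.ofStrictMono f.toOrderHom
    (f.toOrderHom.monotone.strictMono_of_injective (mono_iff_injective.mp ‹_›)),
    Hom.ext _ _ (OrderHom.ext _ _ rfl)⟩

end SimplexCategory

universe u

namespace CategoryTheory.CosimplicialObject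

open SimplexCategory

section

variable {X : CosimplicialObject (Type u)}

lemma map_injective_of_isSplitMono {x y : SimplexCategory} (f : x ⟶ y) [IsSplitMono f] :
    Function.Injective (X.map f) :=
  Function.LeftInverse.injective (g := X.map (retraction f)) fun a => by
    rw [← X.map_comp_apply, IsSplitMono.id, X.map_id_apply]

lemma map_const_eq_map_const_iff {y : X.obj ⦋0⦌} {q : ℕ} {a b : Fin (q + 1)} (hab : a < b) :
    X.map (SimplexCategory.const ⦋0⦌ ⦋q⦌ a) y = X.map (SimplexCategory.const ⦋0⦌ ⦋q⦌ b) y ↔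
      X.δ 1 y = X.δ 0 y := by
  have := mono_mkOfLe hab
  rw [← δ_one_comp_mkOfLe a b hab.le, ← δ_zero_comp_mkOfLe a b hab.le, X.map_comp_apply,
    X.map_comp_apply, (map_injective_of_isSplitMono _).eq_iff]
  rfl

lemma map_eq_map_of_δ_eq {y : X.obj ⦋0⦌} (hy : X.δ 0 y = X.δ 1 y) {q : ℕ}
    (f g : ⦋0⦌ ⟶ ⦋q⦌) : X.map f y = X.map g y := by
  rw [eq_const_of_zero f, eq_const_of_zero g]
  rcases lt_trichotomy (f.toOrderHom 0) (g.toOrderHom 0) with h | h | h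
  · exact (map_const_eq_map_const_iff h).mpr hy.symm
  · rw [h]
  · exact ((map_const_eq_map_const_iff h).mpr hy.symm).symm

lemma eq_of_map_eq_map_of_δ_ne {y : X.obj ⦋0⦌} (hy : X.δ 0 y ≠ X.δ 1 y) {q : ℕ}
    {f g : ⦋0⦌ ⟶ ⦋q⦌} (h : X.map f y = X.map g y) : f = g := by
  rw [eq_const_of_zero f, eq_const_of_zero g] at h ⊢
  rcases lt_trichotomy (f.toOrderHom 0) (g.toOrderHom 0) with hfg | hfg | hfg
  · exact absurd ((map_const_eq_map_const_iff hfg).mp h).symm hy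
  · rw [hfg]
  · exact absurd ((map_const_eq_map_const_iff hfg).mp h.symm).symm hy

end

variable {X : CosimplicialObject Type}

lemma notCoface_of_degree_zero (y : X.obj ⦋0⦌) : NotCoface X y :=
  fun _ h => absurd h (Nat.not_lt_zero _)

lemma epi_of_notCoface_map {p q : ℕ} (f : ⦋p⦌ ⟶ ⦋q⦌) {y : X.obj ⦋p⦌}
    (hy : NotCoface X (X.map f y)) : Epi f := by
  cases q with
  | zero =>
    exact SimplexCategory.epi_iff_surjective.mpr fun _ => ⟨0, Subsingleton.elim (α := Fin 1) _ _⟩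
  | succ n =>
    rw [SimplexCategory.epi_iff_surjective]
    by_contra hf
    obtain ⟨i, f', rfl⟩ := eq_comp_δ_of_not_surjective f hf
    exact hy n n.lt_succ_self (SimplexCategory.δ i)
      (SimplexCategory.mono_iff_injective.mp inferInstance) (X.map f' y)
      (X.map_comp_apply _ _ _).symm

lemma exists_notCoface_map_eq {q : ℕ} (x : X.obj ⦋q⦌) :
    ∃ (p : ℕ) (f : ⦋p⦌ ⟶ ⦋q⦌) (y : X.obj ⦋p⦌), Mono f ∧ NotCoface X y ∧ X.map f y = x := by
  induction q using Nat.strong_induction_on with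
  | _ q ih =>
    by_cases hx : NotCoface X x
    · exact ⟨q, 𝟙 _, x, inferInstance, hx, X.map_id_apply _ _⟩
    · simp only [NotCoface, not_forall, not_not] at hx
      obtain ⟨p', hp', f, hf, z, rfl⟩ := hx
      obtain ⟨p, g, y, _, hy, rfl⟩ := ih p' hp' z
      have : Mono f := SimplexCategory.mono_iff_injective.mpr hf
      exact ⟨p, g ≫ f, y, mono_comp _ _, hy, X.map_comp_apply _ _ _⟩

lemma comp_eq_id_of_map_eq_map {p q : ℕ} {y : X.obj ⦋p⦌} (hy : NotCoface X y)
    {f g : ⦋p⦌ ⟶ ⦋q⦌} (h : X.map f y = X.map g y) {r : ⦋q⦌ ⟶ ⦋p⦌} (hr : f ≫ r = 𝟙 _) :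
    g ≫ r = 𝟙 _ := by
  have hgr : X.map (g ≫ r) y = y := by
    rw [X.map_comp_apply, ← h, ← X.map_comp_apply, hr, X.map_id_apply]
  have := epi_of_notCoface_map (g ≫ r) (hgr ▸ hy)
  exact eq_id_of_epi _

lemma sigma_eq_of_map_eq_map {p p' q : ℕ} {y : X.obj ⦋p⦌} {z : X.obj ⦋p'⦌}
    (hy : NotCoface X y) (hz : NotCoface X z) (f : ⦋p⦌ ⟶ ⦋q⦌) (g : ⦋p'⦌ ⟶ ⦋q⦌) [Mono f] [Mono g]
    (h : X.map f y = X.map g z) : (⟨p, y⟩ : Σ n : ℕ, X.obj ⦋n⦌) = ⟨p', z⟩ := by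
  have hfg : X.map (f ≫ retraction g) y = z := by
    rw [X.map_comp_apply, h, ← X.map_comp_apply, IsSplitMono.id, X.map_id_apply]
  have hgf : X.map (g ≫ retraction f) z = y := by
    rw [X.map_comp_apply, ← h, ← X.map_comp_apply, IsSplitMono.id, X.map_id_apply]
  have := epi_of_notCoface_map _ (hfg ▸ hz)
  have := epi_of_notCoface_map _ (hgf ▸ hy)
  obtain rfl : p = p' := le_antisymm (le_of_epi (g ≫ retraction f)) (le_of_epi (f ≫ retraction g))
  rw [← hfg, eq_id_of_epi (f ≫ retraction g), X.map_id_apply]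

lemma eq_of_map_eq_map_of_notCoface {p q : ℕ} (hp : p ≠ 0) {y : X.obj ⦋p⦌} (hy : NotCoface X y)
    {f g : ⦋p⦌ ⟶ ⦋q⦌} [Mono f] [Mono g] (h : X.map f y = X.map g y) : f = g :=
  eq_of_comp_eq_id_iff hp f g fun _ =>
    ⟨comp_eq_id_of_map_eq_map hy h, comp_eq_id_of_map_eq_map hy h.symm⟩

variable (X)

abbrev ConstantGenerator : Type := {y : X.obj ⦋0⦌ // X.δ 0 y = X.δ 1 y}

abbrev FreeGenerator : Type :=
  {z : Σ p : ℕ, X.obj ⦋p⦌ // NotCoface X z.2 ∧ ¬ (z.1 = 0 ∧ X.δ 0 z.2 = X.δ 1 z.2)}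

abbrev Pieces (q : ℕ) : Type :=
  ConstantGenerator X ⊕ Σ g : FreeGenerator X, InjEmb g.1.1 q

def ofPieces (q : ℕ) : Pieces X q → X.obj ⦋q⦌ :=
  Sum.elim (fun c => X.map (SimplexCategory.const ⦋0⦌ ⦋q⦌ 0) c.1)
    (fun s => X.map (ofOrderEmbedding s.2) s.1.1.2)

variable {X}

lemma FreeGenerator.eq_of_map_eq_map (g : FreeGenerator X) {q : ℕ} {f f' : ⦋g.1.1⦌ ⟶ ⦋q⦌}
    [Mono f] [Mono f'] (h : X.map f g.1.2 = X.map f' g.1.2) : f = f' := by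
  obtain ⟨⟨p, y⟩, hy, hg⟩ := g
  rcases eq_or_ne p 0 with rfl | hp
  · exact eq_of_map_eq_map_of_δ_ne (fun h => hg ⟨rfl, h⟩) h
  · exact eq_of_map_eq_map_of_notCoface hp hy h

lemma ofPieces_surjective (q : ℕ) : Function.Surjective (ofPieces X q) := by
  intro x
  obtain ⟨p, f, y, hf, hy, rfl⟩ := exists_notCoface_map_eq x
  by_cases hc : p = 0 ∧ X.δ 0 y = X.δ 1 y
  · obtain ⟨rfl, hc⟩ := hc
    exact ⟨.inl ⟨y, hc⟩, map_eq_map_of_δ_eq hc _ _⟩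
  · obtain ⟨φ, rfl⟩ := exists_ofOrderEmbedding_eq f
    exact ⟨.inr ⟨⟨⟨p, y⟩, hy, hc⟩, φ⟩, rfl⟩

lemma ofPieces_inl_ne_inr {q : ℕ} (c : ConstantGenerator X)
    (s : Σ g : FreeGenerator X, InjEmb g.1.1 q) :
    ofPieces X q (.inl c) ≠ ofPieces X q (.inr s) := by
  obtain ⟨⟨⟨p, y⟩, hy, hg⟩, φ⟩ := s
  intro h
  obtain ⟨rfl, hcy⟩ := Sigma.mk.inj_iff.mp
    (sigma_eq_of_map_eq_map (notCoface_of_degree_zero c.1) hy _ _ h)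
  exact hg ⟨rfl, eq_of_heq hcy ▸ c.2⟩

lemma ofPieces_injective (q : ℕ) : Function.Injective (ofPieces X q) := by
  rintro (c | ⟨g, φ⟩) (c' | ⟨g', φ'⟩) h
  · exact congrArg Sum.inl (Subtype.ext (map_injective_of_isSplitMono _ h))
  · exact absurd h (ofPieces_inl_ne_inr c _)
  · exact absurd h.symm (ofPieces_inl_ne_inr c' _)
  · obtain rfl : g = g' := Subtype.ext (sigma_eq_of_map_eq_map g.2.1 g'.2.1 _ _ h)
    obtain rfl : φ = φ' := ofOrderEmbedding_injective (g.eq_of_map_eq_map h)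
    rfl

lemma ofPieces_map_δ {q : ℕ} (i : Fin (q + 2)) (s : Pieces X q) :
    ofPieces X (q + 1) (Sum.map id (fun s => ⟨s.1, s.2.trans (Fin.succAboveOrderEmb i)⟩) s) =
      X.δ i (ofPieces X q s) := by
  rcases s with c | ⟨g, φ⟩
  · exact (map_eq_map_of_δ_eq c.2 _ _).trans (X.map_comp_apply _ _ _)
  · exact X.map_comp_apply (ofOrderEmbedding φ) (SimplexCategory.δ i) _

lemma ofPieces_inl (c : ConstantGenerator X) : ofPieces X 0 (.inl c) = c.1 := by
  rw [ofPieces, Sum.elim_inl, SimplexCategory.const_eq_id, X.map_id_apply]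

lemma ofPieces_inr_refl (g : FreeGenerator X) :
    ofPieces X g.1.1 (.inr ⟨g, (OrderIso.refl _).toOrderEmbedding⟩) = g.1.2 :=
  X.map_id_apply _ _

variable (X) in
noncomputable def piecesEquiv (q : ℕ) : Pieces X q ≃ X.obj ⦋q⦌ :=
  .ofBijective (ofPieces X q) ⟨ofPieces_injective q, ofPieces_surjective q⟩

lemma piecesEquiv_apply {q : ℕ} (s : Pieces X q) : piecesEquiv X q s = ofPieces X q s := rfl

end CategoryTheory.CosimplicialObject

open CosimplicialObject in
theorem cosimplicial_splits_as_semicosimplicial (X : CosimplicialObject (Type)) :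
    ∃ e : ∀ q : ℕ,
        X.obj (SimplexCategory.mk q) ≃
          ({y : X.obj (SimplexCategory.mk 0) // X.δ 0 y = X.δ 1 y} ⊕
            (Σ g : {z : Σ p : ℕ, X.obj (SimplexCategory.mk p) //
                NotCoface X z.2 ∧ ¬ (z.1 = 0 ∧ X.δ 0 z.2 = X.δ 1 z.2)},
              InjEmb g.1.1 q)),
      -- compatibility with all coface maps: constant on the constant pieces,
      -- postcomposition with `d^i` on the free pieces
      (∀ (q : ℕ) (i : Fin (q + 2)) (x : X.obj (SimplexCategory.mk q)),
          e (q + 1) (X.δ i x) =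
            Sum.map id
              (fun s : (Σ g : {z : Σ p : ℕ, X.obj (SimplexCategory.mk p) //
                  NotCoface X z.2 ∧ ¬ (z.1 = 0 ∧ X.δ 0 z.2 = X.δ 1 z.2)},
                    InjEmb g.1.1 q) =>
                (⟨s.1, s.2.trans (Fin.succAboveOrderEmb i)⟩ :
                  Σ g : {z : Σ p : ℕ, X.obj (SimplexCategory.mk p) //
                    NotCoface X z.2 ∧ ¬ (z.1 = 0 ∧ X.δ 0 z.2 = X.δ 1 z.2)},
                      InjEmb g.1.1 (q + 1)))
              (e q x)) ∧
      -- each constant generator indexes its own constant piece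
      (∀ c : {y : X.obj (SimplexCategory.mk 0) // X.δ 0 y = X.δ 1 y},
          e 0 c.1 = Sum.inl c) ∧
      -- each free generator corresponds to the identity injection of its piece
      (∀ g : {z : Σ p : ℕ, X.obj (SimplexCategory.mk p) //
          NotCoface X z.2 ∧ ¬ (z.1 = 0 ∧ X.δ 0 z.2 = X.δ 1 z.2)},
          e g.1.1 g.1.2 =
            Sum.inr ⟨g, (OrderIso.refl (Fin (g.1.1 + 1))).toOrderEmbedding⟩) := by
  refine ⟨fun q => (piecesEquiv X q).symm, fun q i x => ?_, fun c => ?_, fun g => ?_⟩ <;>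
    rw [Equiv.symm_apply_eq, piecesEquiv_apply]
  · rw [ofPieces_map_δ, ← piecesEquiv_apply, Equiv.apply_symm_apply]
  · rw [ofPieces_inl]
  · rw [ofPieces_inr_refl]
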